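/- Work in the polynomial ring A = ℚ[H, L, S, c₁, c₂, c₃] and set Z₁ = H + 2L, Z₂ = H + 3L, Z₃ = S. Let F : A[E] → A be the A-linear map determined by F(1) = 1, F(E) = F(E²) = 0, and F(Eⁿ) = h_{n−3}(Z₁, Z₂, Z₃)·Z₁Z₂Z₃ for n ≥ 3; and let ν : ℚ[L, S, c₁, c₂, c₃][H] → ℚ[L, S, c₁, c₂, c₃] be the linear map over ℚ[L, S, c₁, c₂, c₃] determined by ν(1) = ν(H) = 0 and ν(H^k) = ((−2)^{k−1} − (−3)^{k−1})·L^{k−2} for k ≥ 2. Set c₃(TY) := [3c₁H² + 13c₁HL + 12c₁L² − c₂L + c₃ − 8H³ − 52H²L − 108HL² − 72L³] + E·(−4c₁H − 7c₁L + c₁S + 16H² + 66HL + 66L² − LS − S²) + E²·(−10H − 19L + S) + 2E³. Then ν(F(c₃(TY)·(3H + 6L − 2E))) = 12L(c₁ − 6L) + 30LS − 6S². (This is the paper's computation for the SU(2)-model: φ_*(c₃(TY)·[Y]) = 12L(c₁ − 6L) + 30LS − 6S², the A₁ entry of the table of pushforwards of c₃.) -/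

import Mathlib

namespace SU2ModelC3Pushforward

/-- The ring `ℚ[L, S, c₁, c₂, c₃]`: variables `0 ↦ L`, `1 ↦ S`, `2 ↦ c₁`, `3 ↦ c₂`, `4 ↦ c₃`. -/
noncomputable abbrev B : Type := MvPolynomial (Fin 5) ℚ

/-- The ring `A = ℚ[H, L, S, c₁, c₂, c₃]`, realized as `B[H]`. -/
noncomputable abbrev A : Type := Polynomial B

noncomputable def Lb : B := MvPolynomial.X 0
noncomputable def Sb : B := MvPolynomial.X 1
noncomputable def c₁b : B := MvPolynomial.X 2
noncomputable def c₂b : B := MvPolynomial.X 3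
noncomputable def c₃b : B := MvPolynomial.X 4

noncomputable def H : A := Polynomial.X
noncomputable def L : A := Polynomial.C Lb
noncomputable def S : A := Polynomial.C Sb
noncomputable def c₁ : A := Polynomial.C c₁b
noncomputable def c₂ : A := Polynomial.C c₂b
noncomputable def c₃ : A := Polynomial.C c₃b

noncomputable def Z₁ : A := H + 2 * L
noncomputable def Z₂ : A := H + 3 * L
noncomputable def Z₃ : A := S

/-- Complete homogeneous symmetric polynomial `h_j(Z₁, Z₂, Z₃)`. -/
noncomputable def hcomp (j : ℕ) : A :=
  ∑ x ∈ Finset.Nat.antidiagonalTuple 3 j, (Z₁ ^ x 0 * Z₂ ^ x 1 * Z₃ ^ x 2)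

/-- The `A`-linear map `F : A[E] → A` determined by `F(1) = 1`, `F(E) = F(E²) = 0`, and
`F(Eⁿ) = h_{n−3}(Z₁, Z₂, Z₃)·Z₁Z₂Z₃` for `n ≥ 3`. -/
noncomputable def F (p : Polynomial A) : A :=
  p.sum fun n a =>
    a * if n = 0 then 1 else if n ≤ 2 then 0 else hcomp (n - 3) * (Z₁ * Z₂ * Z₃)

/-- The linear map `ν : B[H] → B` determined by `ν(1) = ν(H) = 0` and
`ν(H^k) = ((−2)^{k−1} − (−3)^{k−1})·L^{k−2}` for `k ≥ 2`. -/
noncomputable def ν (p : A) : B :=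
  p.sum fun k a =>
    a * if k ≤ 1 then 0 else ((-2 : B) ^ (k - 1) - (-3 : B) ^ (k - 1)) * Lb ^ (k - 2)

/-- `c₃(TY)` of the SU(2)-model, as an element of `A[E]`. -/
noncomputable def c₃TY : Polynomial A :=
  Polynomial.C (3 * c₁ * H ^ 2 + 13 * c₁ * H * L + 12 * c₁ * L ^ 2 - c₂ * L + c₃
      - 8 * H ^ 3 - 52 * H ^ 2 * L - 108 * H * L ^ 2 - 72 * L ^ 3)
    + Polynomial.X * Polynomial.C (-4 * c₁ * H - 7 * c₁ * L + c₁ * S + 16 * H ^ 2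
      + 66 * H * L + 66 * L ^ 2 - L * S - S ^ 2)
    + Polynomial.X ^ 2 * Polynomial.C (-10 * H - 19 * L + S)
    + 2 * Polynomial.X ^ 3

/-! The pushforward `F` along the blowup only sees `E⁰`, `E³` and `E⁴` of `c₃(TY)·[Y]`, and only
`h₀ = 1` and `h₁ = Z₁ + Z₂ + Z₃` enter; the result is a quartic in `H` on which `ν` reads off the
coefficients of `H²`, `H³`, `H⁴` with weights `1`, `−5L`, `19L²`. -/

open Polynomial

section WeightedSum

variable {R : Type*} [CommSemiring R]

noncomputable def weightedSum (w : ℕ → R) : R[X] →ₗ[R] R :=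
  lsum fun n => LinearMap.mulRight R (w n)

theorem weightedSum_C_mul_X_pow (w : ℕ → R) (a : R) (n : ℕ) :
    weightedSum w (C a * X ^ n) = a * w n := by
  rw [C_mul_X_pow_eq_monomial, weightedSum, lsum_apply,
    sum_monomial_index _ _ (LinearMap.map_zero _), LinearMap.mulRight_apply]

theorem weightedSum_quartic (w : ℕ → R) (a₀ a₁ a₂ a₃ a₄ : R) :
    weightedSum w (C a₀ + C a₁ * X + C a₂ * X ^ 2 + C a₃ * X ^ 3 + C a₄ * X ^ 4) =
      a₀ * w 0 + a₁ * w 1 + a₂ * w 2 + a₃ * w 3 + a₄ * w 4 := by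
  have constant := weightedSum_C_mul_X_pow w a₀ 0
  have linear := weightedSum_C_mul_X_pow w a₁ 1
  rw [pow_zero, mul_one] at constant
  rw [pow_one] at linear
  simp only [map_add, weightedSum_C_mul_X_pow, constant, linear]

end WeightedSum

theorem F_eq_weightedSum (p : A[X]) :
    F p = weightedSum
      (fun n => if n = 0 then 1 else if n ≤ 2 then 0 else hcomp (n - 3) * (Z₁ * Z₂ * Z₃)) p :=
  rfl

theorem ν_eq_weightedSum (p : A) :
    ν p = weightedSum
      (fun k => if k ≤ 1 then 0 else ((-2 : B) ^ (k - 1) - (-3 : B) ^ (k - 1)) * Lb ^ (k - 2)) p :=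
  rfl

theorem hcomp_zero : hcomp 0 = 1 := by
  simp [hcomp, Finset.Nat.antidiagonalTuple_zero_right]

theorem hcomp_one : hcomp 1 = Z₁ + Z₂ + Z₃ := by
  have tuples : Finset.Nat.antidiagonalTuple 3 1 = {![1, 0, 0], ![0, 1, 0], ![0, 0, 1]} := by
    decide
  rw [hcomp, tuples, Finset.sum_insert (by decide), Finset.sum_insert (by decide),
    Finset.sum_singleton]
  simp only [Fin.isValue, Matrix.cons_val_zero, Matrix.cons_val_one, Matrix.cons_val, pow_zero,
    pow_one, mul_one, one_mul]
  ring

theorem F_quartic (a₀ a₁ a₂ a₃ a₄ : A) :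
    F (C a₀ + C a₁ * X + C a₂ * X ^ 2 + C a₃ * X ^ 3 + C a₄ * X ^ 4) =
      a₀ + (a₃ + a₄ * (Z₁ + Z₂ + Z₃)) * (Z₁ * Z₂ * Z₃) := by
  rw [F_eq_weightedSum, weightedSum_quartic]
  norm_num [hcomp_zero, hcomp_one]
  ring

theorem ν_quartic (b₀ b₁ b₂ b₃ b₄ : B) :
    ν (C b₀ + C b₁ * H + C b₂ * H ^ 2 + C b₃ * H ^ 3 + C b₄ * H ^ 4) =
      b₂ - 5 * b₃ * Lb + 19 * b₄ * Lb ^ 2 := by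
  rw [ν_eq_weightedSum, H, weightedSum_quartic]
  norm_num
  ring

theorem F_cubic_mul_linear (a₀ a₁ a₂ t : A) :
    F ((C a₀ + X * C a₁ + X ^ 2 * C a₂ + 2 * X ^ 3) * (C t - 2 * X)) =
      a₀ * t + (2 * (t - a₂) - 4 * (Z₁ + Z₂ + Z₃)) * (Z₁ * Z₂ * Z₃) := by
  have expand : (C a₀ + X * C a₁ + X ^ 2 * C a₂ + 2 * X ^ 3) * (C t - 2 * X) =
      C (a₀ * t) + C (a₁ * t - 2 * a₀) * X + C (a₂ * t - 2 * a₁) * X ^ 2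
        + C (2 * t - 2 * a₂) * X ^ 3 + C (-4) * X ^ 4 := by
    simp only [map_sub, map_mul, map_neg, map_ofNat]
    ring
  rw [expand, F_quartic]
  ring

/-- For the SU(2)-model,
`φ_*(c₃(TY)·[Y]) = 12L(c₁ − 6L) + 30LS − 6S²`. -/
theorem su2_c3_pushforward :
    ν (F (c₃TY * (Polynomial.C (3 * H + 6 * L) - 2 * Polynomial.X))) =
      12 * Lb * (c₁b - 6 * Lb) + 30 * Lb * Sb - 6 * Sb ^ 2 := by
  have pushforward_E : F (c₃TY * (C (3 * H + 6 * L) - 2 * X)) =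
      C (6 * Lb * c₃b - 6 * Lb ^ 2 * c₂b - 36 * Lb ^ 2 * Sb ^ 2 + 72 * Lb ^ 3 * c₁b
          + 180 * Lb ^ 3 * Sb - 432 * Lb ^ 4)
        + C (3 * c₃b - 3 * Lb * c₂b - 30 * Lb * Sb ^ 2 + 114 * Lb ^ 2 * c₁b + 258 * Lb ^ 2 * Sb
          - 864 * Lb ^ 3) * H
        + C (-6 * Sb ^ 2 + 57 * Lb * c₁b + 120 * Lb * Sb - 636 * Lb ^ 2) * H ^ 2
        + C (9 * c₁b + 18 * Sb - 204 * Lb) * H ^ 3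
        + C (-24) * H ^ 4 := by
    rw [c₃TY, F_cubic_mul_linear]
    simp only [Z₁, Z₂, Z₃, H, L, S, c₁, c₂, c₃, map_add, map_sub, map_mul, map_pow, map_neg,
      map_ofNat]
    ring
  rw [pushforward_E, ν_quartic]
  ring

end SU2ModelC3Pushforward
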